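/- For every ε ∈ ℝ: (i) T ∘ R ∘ T⁻¹ equals the map P(u,v) = (−u + v/2, v), P ∘ P = id, and P ∘ G_ε ∘ P = G_ε⁻¹, where G_ε = T ∘ H_ε ∘ T⁻¹; (ii) the map S_ε := T ∘ R ∘ H_ε ∘ T⁻¹ is given explicitly by S_ε(u,v) = (u, −v − 4u² + ε), satisfies S_ε ∘ S_ε = id, and S_ε ∘ F_ε ∘ S_ε = F_ε⁻¹, where F_ε = T ∘ H_ε² ∘ T⁻¹. -/
import Mathlib

noncomputable section

/-- The area-preserving Hénon map `H_ε(x,y) = (y, -x + 3 + ε - y²)`. -/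
def henon (ε : ℝ) : ℝ × ℝ → ℝ × ℝ := fun p => (p.2, -p.1 + 3 + ε - p.2 ^ 2)

/-- The second iterate `H_ε² = H_ε ∘ H_ε`. -/
def henon2 (ε : ℝ) : ℝ × ℝ → ℝ × ℝ := henon ε ∘ henon ε

/-- The reflection `R(x,y) = (y,x)`. -/
def reflR : ℝ × ℝ → ℝ × ℝ := fun p => (p.2, p.1)

/-- The affine change of coordinates `T(x,y) = (y/2 - 1/2, x + y - 2)`. -/
def Tmap : ℝ × ℝ → ℝ × ℝ := fun p => (p.2 / 2 - 1 / 2, p.1 + p.2 - 2)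

/-- Its inverse `T⁻¹(u,v) = (v + 1 - 2u, 2u + 1)`. -/
def TmapInv : ℝ × ℝ → ℝ × ℝ := fun p => (p.2 + 1 - 2 * p.1, 2 * p.1 + 1)

/-- The reversor `P(u,v) = (-u + v/2, v)`. -/
def Pmap : ℝ × ℝ → ℝ × ℝ := fun p => (-p.1 + p.2 / 2, p.2)

/-- `G_ε = T ∘ H_ε ∘ T⁻¹`. -/
def Gmap (ε : ℝ) : ℝ × ℝ → ℝ × ℝ := Tmap ∘ henon ε ∘ TmapInv

/-- `S_ε = T ∘ R ∘ H_ε ∘ T⁻¹`. -/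
def Smap (ε : ℝ) : ℝ × ℝ → ℝ × ℝ := Tmap ∘ reflR ∘ henon ε ∘ TmapInv

/-- `F_ε = T ∘ H_ε² ∘ T⁻¹`. -/
def Fmap (ε : ℝ) : ℝ × ℝ → ℝ × ℝ := Tmap ∘ henon2 ε ∘ TmapInv

/-- (i) `T ∘ R ∘ T⁻¹ = P`, `P ∘ P = id`, and `P ∘ G_ε ∘ P = G_ε⁻¹`;
(ii) `S_ε(u,v) = (u, -v - 4u² + ε)`, `S_ε ∘ S_ε = id`, and `S_ε ∘ F_ε ∘ S_ε = F_ε⁻¹`. -/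
theorem conjugated_reversors (ε : ℝ) :
    Tmap ∘ reflR ∘ TmapInv = Pmap ∧
    Pmap ∘ Pmap = id ∧
    (Pmap ∘ Gmap ε ∘ Pmap) ∘ Gmap ε = id ∧
    Gmap ε ∘ (Pmap ∘ Gmap ε ∘ Pmap) = id ∧
    Smap ε = (fun p => (p.1, -p.2 - 4 * p.1 ^ 2 + ε)) ∧
    Smap ε ∘ Smap ε = id ∧
    (Smap ε ∘ Fmap ε ∘ Smap ε) ∘ Fmap ε = id ∧
    Fmap ε ∘ (Smap ε ∘ Fmap ε ∘ Smap ε) = id := by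
  refine ⟨?_, ?_, ?_, ?_, ?_, ?_, ?_, ?_⟩ <;>
    funext p <;>
    simp only [Tmap, TmapInv, reflR, henon, henon2, Pmap, Gmap, Smap, Fmap,
      Function.comp_apply, id_eq] <;>
    exact Prod.ext (by ring) (by ring)
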